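/- (Pointwise control of iterated spherical gradient norm) For a smooth positive g on ℝ³ \ {0} and z ≠ 0, the Hilbert–Schmidt norm of the matrix ∇_ẑ(∇_ẑ log g) satisfies ‖∇_ẑ(∇_ẑ log g)‖²_HS = |z|⁴ ‖(Π_z^⊥∇)² log g‖²_HS = ‖∇²_{S²} log ḡ‖²_HS + |∇_{S²} log ḡ|², where ḡ(r,ω) = g(rω), i.e. it equals the iterated carré du champ Γ₂(log ḡ, log ḡ) of the spherical Laplacian on S². -/

import Mathlib

open MeasureTheory Real
open scoped RealInnerProductSpace ENNReal BigOperators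

noncomputable section

abbrev E3 : Type := EuclideanSpace ℝ (Fin 3)

/-- The unit radial vector `ẑ = z/|z|`. -/
def zhat (z : E3) : E3 := ‖z‖⁻¹ • z

/-- Orthogonal projection `Π_z^⊥ v = v − ⟨ẑ,v⟩ẑ` onto the plane perpendicular to `z`. -/
def proj (z v : E3) : E3 := v - ⟪zhat z, v⟫ • zhat z

/-- Standard basis vectors of `ℝ³`. -/
def ee (i : Fin 3) : E3 := EuclideanSpace.single i (1:ℝ)

/-- Euclidean Laplacian as the trace of the Hessian. -/
def lap (h : E3 → ℝ) (z : E3) : ℝ :=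
  ∑ i : Fin 3, ⟪ee i, fderiv ℝ (fun w => gradient h w) z (ee i)⟫

/-- Surface measure on the unit sphere `S² ⊂ ℝ³` (total mass `4π`). -/
def sphμ : Measure (Metric.sphere (0:E3) 1) := (volume : Measure E3).toSphere


namespace ISG
variable {z : E3}


lemma norm_zhat (hz : z ≠ 0) : ‖zhat z‖ = 1 := by
  have h : ‖z‖ ≠ 0 := norm_ne_zero_iff.mpr hz
  rw [zhat, norm_smul, norm_inv, norm_norm, inv_mul_cancel₀ h]

lemma inner_zhat_self (hz : z ≠ 0) : ⟪zhat z, zhat z⟫ = 1 := by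
  rw [real_inner_self_eq_norm_sq, norm_zhat hz]; norm_num

lemma inner_zhat_proj (hz : z ≠ 0) (v : E3) : ⟪zhat z, proj z v⟫ = 0 := by
  rw [proj, inner_sub_right, real_inner_smul_right, inner_zhat_self hz]; ring

lemma inner_proj_right (u v : E3) : ⟪proj z u, v⟫ = ⟪u, proj z v⟫ := by
  rw [proj, proj, inner_sub_left, inner_sub_right, real_inner_smul_left, real_inner_smul_right,
    real_inner_comm u (zhat z)]
  ring

lemma proj_idem (hz : z ≠ 0) (v : E3) : proj z (proj z v) = proj z v := by
  rw [proj, proj, inner_sub_right, real_inner_smul_right, inner_zhat_self hz]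
  module

lemma inner_z_proj (hz : z ≠ 0) (v : E3) : ⟪z, proj z v⟫ = 0 := by
  have h2 := inner_zhat_proj hz v
  have h : ‖z‖ ≠ 0 := norm_ne_zero_iff.mpr hz
  rw [zhat, real_inner_smul_left] at h2
  rcases mul_eq_zero.mp h2 with h3 | h3
  · exact absurd h3 (inv_ne_zero h)
  · exact h3

lemma inner_ee (u : E3) (i : Fin 3) : ⟪u, ee i⟫ = u i := by
  simp [ee, EuclideanSpace.inner_single_right]

lemma sum_inner_ee (u v : E3) : ∑ b : Fin 3, ⟪u, ee b⟫ * ⟪v, ee b⟫ = ⟪u, v⟫ := by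
  simp [ee, PiLp.inner_apply, RCLike.inner_apply, mul_comm]

lemma inner_ee' (v : E3) (i : Fin 3) : ⟪ee i, v⟫ = v i := by
  simp [ee, EuclideanSpace.inner_single_left]

lemma sum_smul_ee_apply (c : Fin 3 → ℝ) (j : Fin 3) :
    (∑ i : Fin 3, c i • ee i) j = c j := by
  simp [ee, EuclideanSpace.single_apply, Fin.sum_univ_three]
  fin_cases j <;> simp

lemma expand_ee (v : E3) : v = ∑ i : Fin 3, v i • ee i := by
  ext j
  rw [sum_smul_ee_apply]

lemma gradient_rep (f : E3 → ℝ) (w : E3) :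
    gradient f w = ∑ i : Fin 3, (fderiv ℝ f w (ee i)) • ee i := by
  have hcoord : ∀ j, gradient f w j = fderiv ℝ f w (ee j) := by
    intro j
    rw [← inner_ee (gradient f w) j]
    exact InnerProductSpace.toDual_symm_apply
  ext j
  rw [sum_smul_ee_apply, hcoord j]

theorem hasFDerivAt_norm' (hz : z ≠ 0) :
    HasFDerivAt (fun w : E3 => ‖w‖) (‖z‖⁻¹ • innerSL ℝ z) z := by
  have h : ‖z‖ ≠ 0 := norm_ne_zero_iff.mpr hz
  have hzz : ⟪z, z⟫ ≠ 0 := by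
    rw [real_inner_self_eq_norm_sq]; positivity
  have h1 : HasFDerivAt (fun w : E3 => ⟪w, w⟫)
      ((fderivInnerCLM ℝ (z, z)).comp
        ((ContinuousLinearMap.id ℝ E3).prod (ContinuousLinearMap.id ℝ E3))) z := by
    have := (hasFDerivAt_id z).inner ℝ (hasFDerivAt_id z)
    simpa using this
  have hsq : HasDerivAt Real.sqrt (1 / (2 * Real.sqrt ⟪z, z⟫)) ((fun w : E3 => ⟪w, w⟫) z) :=
    Real.hasDerivAt_sqrt hzz
  have h2 := HasDerivAt.comp_hasFDerivAt (f := fun w : E3 => ⟪w, w⟫) z hsq h1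
  have h3 : (Real.sqrt ∘ fun w : E3 => ⟪w, w⟫) = fun w : E3 => ‖w‖ := by
    funext w
    simp only [Function.comp_apply]
    rw [real_inner_self_eq_norm_mul_norm, Real.sqrt_mul_self (norm_nonneg w)]
  rw [h3] at h2
  refine h2.congr_fderiv ?_
  ext v
  have h4 : Real.sqrt ⟪z, z⟫ = ‖z‖ := by
    rw [real_inner_self_eq_norm_mul_norm, Real.sqrt_mul_self (norm_nonneg z)]
  simp only [ContinuousLinearMap.smul_apply, innerSL_apply_apply, ContinuousLinearMap.comp_apply,
    ContinuousLinearMap.prod_apply, ContinuousLinearMap.coe_id', id_eq, fderivInnerCLM_apply,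
    h4, smul_eq_mul, real_inner_comm v z]
  field_simp
  ring

theorem hasFDerivAt_zhat (hz : z ≠ 0) :
    ∃ D : E3 →L[ℝ] E3, HasFDerivAt (fun w : E3 => zhat w) D z ∧
      ∀ v, D v = ‖z‖⁻¹ • proj z v := by
  have h : ‖z‖ ≠ 0 := norm_ne_zero_iff.mpr hz
  have hinv0 : HasDerivAt (fun y : ℝ => y⁻¹) (-(‖z‖ ^ 2)⁻¹) ((fun w : E3 => ‖w‖) z) :=
    hasDerivAt_inv h
  have hinv := HasDerivAt.comp_hasFDerivAt (f := fun w : E3 => ‖w‖) z hinv0 (hasFDerivAt_norm' hz)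
  have hinv' : HasFDerivAt (fun w : E3 => ‖w‖⁻¹)
      ((-(‖z‖ ^ 2)⁻¹) • (‖z‖⁻¹ • innerSL ℝ z)) z := hinv
  have hN := hinv'.smul (hasFDerivAt_id z)
  simp only [id_eq] at hN
  refine ⟨_, hN, fun v => ?_⟩
  have hval : (‖z‖⁻¹ • ContinuousLinearMap.id ℝ E3
      + ((-(‖z‖ ^ 2)⁻¹) • (‖z‖⁻¹ • innerSL ℝ z)).smulRight z) v
      = ‖z‖⁻¹ • v + ((-(‖z‖ ^ 2)⁻¹) * (‖z‖⁻¹ * ⟪z, v⟫)) • z := by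
    simp only [ContinuousLinearMap.add_apply, ContinuousLinearMap.smul_apply,
      ContinuousLinearMap.coe_id', id_eq, ContinuousLinearMap.smulRight_apply,
      innerSL_apply_apply, smul_eq_mul]
  rw [hval, proj, zhat, real_inner_smul_left, smul_sub, smul_smul, smul_smul]
  have hc : (-(‖z‖ ^ 2)⁻¹) * (‖z‖⁻¹ * ⟪z, v⟫) = -(‖z‖⁻¹ * (‖z‖⁻¹ * ⟪z, v⟫) * ‖z‖⁻¹) := by
    rw [neg_mul, neg_eq_iff_eq_neg, neg_neg, sq]
    field_simp
  rw [hc]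
  module

theorem hasFDerivAt_projfield (hz : z ≠ 0) {G : E3 → E3} {H' : E3 →L[ℝ] E3}
    (hG : HasFDerivAt G H' z) :
    ∃ D : E3 →L[ℝ] E3, HasFDerivAt (fun w => proj w (G w)) D z ∧
      ∀ v, D v = H' v - (⟪zhat z, H' v⟫ + ‖z‖⁻¹ * ⟪proj z v, G z⟫) • zhat z
        - (⟪zhat z, G z⟫ * ‖z‖⁻¹) • proj z v := by
  obtain ⟨DN, hN, hNv⟩ := hasFDerivAt_zhat hz
  have hin := (hN.inner ℝ hG).smul hN
  have hW0 := hG.sub hin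
  refine ⟨_, hW0, fun v => ?_⟩
  have : (H' - (⟪zhat z, G z⟫ • DN
        + (((fderivInnerCLM ℝ (zhat z, G z)).comp (DN.prod H')).smulRight (zhat z)))) v
      = H' v - (⟪zhat z, G z⟫ • DN v + (⟪zhat z, H' v⟫ + ⟪DN v, G z⟫) • zhat z) := by
    simp only [ContinuousLinearMap.sub_apply, ContinuousLinearMap.add_apply,
      ContinuousLinearMap.smul_apply, ContinuousLinearMap.smulRight_apply,
      ContinuousLinearMap.comp_apply, ContinuousLinearMap.prod_apply, fderivInnerCLM_apply]
  rw [this, hNv, real_inner_smul_left, smul_smul]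
  module

theorem core_sum (hz : z ≠ 0) (K : E3 →L[ℝ] E3) (G0 : E3)
    (hsymm : ∀ u v : E3, ⟪K u, v⟫ = ⟪K v, u⟫) (D : Fin 3 → E3)
    (hD : ∀ a, D a = K (proj z (ee a))
        - (⟪zhat z, K (proj z (ee a))⟫ + ‖z‖⁻¹ * ⟪proj z (proj z (ee a)), G0⟫) • zhat z
        - (⟪zhat z, G0⟫ * ‖z‖⁻¹) • proj z (proj z (ee a))) :
    ∑ a : Fin 3, ∑ b : Fin 3, ⟪D a, ee b⟫ ^ 2
      = (∑ a : Fin 3, ∑ b : Fin 3,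
          (⟪proj z (ee a), K (proj z (ee b))⟫
            - 1 / ‖z‖ * ⟪zhat z, G0⟫ * ⟪ee a, proj z (ee b)⟫) ^ 2)
        + ‖z‖⁻¹ ^ 2 * ‖proj z G0‖ ^ 2 := by
  have hnz : ‖z‖ ≠ 0 := norm_ne_zero_iff.mpr hz
  set T : Fin 3 → Fin 3 → ℝ := fun a b =>
    ⟪proj z (ee a), K (proj z (ee b))⟫ - 1 / ‖z‖ * ⟪zhat z, G0⟫ * ⟪ee a, proj z (ee b)⟫ with hT
  set s : Fin 3 → ℝ := fun a => -(‖z‖⁻¹ * ⟪proj z (ee a), G0⟫) with hs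
  -- pointwise decomposition
  have hkey : ∀ a b : Fin 3, ⟪D a, ee b⟫ = T a b + s a * ⟪zhat z, ee b⟫ := by
    intro a b
    rw [hD a, proj_idem hz]
    have heb : (ee b : E3) = proj z (ee b) + ⟪zhat z, ee b⟫ • zhat z := by
      rw [proj]; module
    rw [inner_sub_left, inner_sub_left, real_inner_smul_left, real_inner_smul_left]
    have h1 : ⟪K (proj z (ee a)), ee b⟫
        = ⟪proj z (ee a), K (proj z (ee b))⟫ + ⟪zhat z, ee b⟫ * ⟪K (proj z (ee a)), zhat z⟫ := by
      conv_lhs => rw [heb]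
      rw [inner_add_right, real_inner_smul_right,
        hsymm (proj z (ee a)) (proj z (ee b)),
        real_inner_comm (K (proj z (ee b))) (proj z (ee a))]
    rw [h1, ISG.inner_proj_right (ee a) (ee b),
      real_inner_comm (zhat z) (K (proj z (ee a)))]
    simp only [hT, hs]
    ring
  -- vanishing cross term
  have hq : ∀ a b : Fin 3,
      T a b = ⟪proj z (K (proj z (ee a))) - (1 / ‖z‖ * ⟪zhat z, G0⟫) • proj z (ee a), ee b⟫ := by
    intro a b
    rw [inner_sub_left, real_inner_smul_left, ISG.inner_proj_right (K (proj z (ee a))) (ee b),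
      hsymm]
    simp only [hT]
    rw [real_inner_comm (proj z (ee a)) (K (proj z (ee b))), ISG.inner_proj_right (ee a) (ee b)]
  have hcross : ∀ a : Fin 3, ∑ b : Fin 3, T a b * ⟪zhat z, ee b⟫ = 0 := by
    intro a
    have := sum_inner_ee (proj z (K (proj z (ee a))) - (1 / ‖z‖ * ⟪zhat z, G0⟫) • proj z (ee a))
      (zhat z)
    calc ∑ b : Fin 3, T a b * ⟪zhat z, ee b⟫
        = ⟪proj z (K (proj z (ee a))) - (1 / ‖z‖ * ⟪zhat z, G0⟫) • proj z (ee a), zhat z⟫ := by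
          rw [← this]
          exact Finset.sum_congr rfl fun b _ => by rw [hq a b]
      _ = 0 := by
          rw [inner_sub_left, real_inner_smul_left,
            real_inner_comm (zhat z) (proj z (K (proj z (ee a)))),
            real_inner_comm (zhat z) (proj z (ee a)),
            inner_zhat_proj hz, inner_zhat_proj hz]
          ring
  have hone : ∑ b : Fin 3, ⟪zhat z, ee b⟫ * ⟪zhat z, ee b⟫ = 1 := by
    rw [sum_inner_ee, inner_zhat_self hz]
  have hsumb : ∀ a : Fin 3, ∑ b : Fin 3, ⟪D a, ee b⟫ ^ 2 = (∑ b : Fin 3, T a b ^ 2) + s a ^ 2 := by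
    intro a
    calc ∑ b : Fin 3, ⟪D a, ee b⟫ ^ 2
        = ∑ b : Fin 3, (T a b ^ 2 + (2 * s a) * (T a b * ⟪zhat z, ee b⟫)
            + s a ^ 2 * (⟪zhat z, ee b⟫ * ⟪zhat z, ee b⟫)) := by
          exact Finset.sum_congr rfl fun b _ => by rw [hkey a b]; ring
      _ = (∑ b : Fin 3, T a b ^ 2) + (2 * s a) * (∑ b : Fin 3, T a b * ⟪zhat z, ee b⟫)
            + s a ^ 2 * (∑ b : Fin 3, ⟪zhat z, ee b⟫ * ⟪zhat z, ee b⟫) := by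
          rw [Finset.sum_add_distrib, Finset.sum_add_distrib, ← Finset.mul_sum, ← Finset.mul_sum]
      _ = (∑ b : Fin 3, T a b ^ 2) + s a ^ 2 := by rw [hcross a, hone]; ring
  have hsums : ∑ a : Fin 3, s a ^ 2 = ‖z‖⁻¹ ^ 2 * ‖proj z G0‖ ^ 2 := by
    have h2 : ∀ a : Fin 3, s a ^ 2
        = ‖z‖⁻¹ ^ 2 * (⟪proj z G0, ee a⟫ * ⟪proj z G0, ee a⟫) := by
      intro a
      simp only [hs]
      rw [ISG.inner_proj_right (ee a) G0, real_inner_comm (ee a) (proj z G0)]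
      ring
    rw [Finset.sum_congr rfl fun a _ => h2 a, ← Finset.mul_sum, sum_inner_ee,
      real_inner_self_eq_norm_sq]
  calc ∑ a : Fin 3, ∑ b : Fin 3, ⟪D a, ee b⟫ ^ 2
      = ∑ a : Fin 3, ((∑ b : Fin 3, T a b ^ 2) + s a ^ 2) :=
        Finset.sum_congr rfl fun a _ => hsumb a
    _ = (∑ a : Fin 3, ∑ b : Fin 3, T a b ^ 2) + ∑ a : Fin 3, s a ^ 2 :=
        Finset.sum_add_distrib
    _ = _ := by rw [hsums]

end ISG

/-- pointwise identity for the iterated spherical gradient: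
`‖∇_ẑ(∇_ẑ log g)‖²_HS = |z|⁴‖(Π_z^⊥∇)² log g‖²_HS = ‖∇²_{S²} log ḡ‖²_HS + |∇_{S²} log ḡ|²`,
where the extrinsic spherical Hessian at radius `r = |z|` is
`(1/r²)∇²_{S²} log ḡ = Π^⊥∇²log g Π^⊥ − (1/|z|)(∂_{|z|}log g)Π^⊥` and
`|∇_{S²} log ḡ|² = |z|²|Π_z^⊥∇log g|²`, i.e. it equals the iterated carré du champ
`Γ₂(log ḡ, log ḡ)` of the spherical Laplacian. -/
theorem iterated_spherical_gradient_HS (g : E3 → ℝ) (hg : ContDiffOn ℝ (⊤ : ℕ∞) g {0}ᶜ)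
    (hgpos : ∀ z : E3, z ≠ 0 → 0 < g z) (z : E3) (hz : z ≠ 0) :
    let h : E3 → ℝ := fun w => Real.log (g w)
    let W : E3 → E3 := fun w => proj w (gradient h w)
    let H : E3 → E3 := fun v => fderiv ℝ (fun w => gradient h w) z v
    let dr : ℝ := ⟪zhat z, gradient h z⟫
    ((∑ a : Fin 3, ∑ b : Fin 3,
        (⟪fderiv ℝ (fun w => ‖w‖ • W w) z (‖z‖ • proj z (ee a)), ee b⟫) ^ 2)
      = ‖z‖ ^ 4 * ∑ a : Fin 3, ∑ b : Fin 3,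
          (⟪fderiv ℝ W z (proj z (ee a)), ee b⟫) ^ 2)
    ∧ (‖z‖ ^ 4 * (∑ a : Fin 3, ∑ b : Fin 3,
          (⟪fderiv ℝ W z (proj z (ee a)), ee b⟫) ^ 2)
        = ‖z‖ ^ 4 * (∑ a : Fin 3, ∑ b : Fin 3,
            (⟪proj z (ee a), H (proj z (ee b))⟫
              - (1 / ‖z‖) * dr * ⟪ee a, proj z (ee b)⟫) ^ 2)
          + ‖z‖ ^ 2 * ‖proj z (gradient h z)‖ ^ 2) := by
  intro h W H dr
  have hnz : ‖z‖ ≠ 0 := norm_ne_zero_iff.mpr hz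
  have hopen : ({(0:E3)}ᶜ : Set E3) ∈ nhds z := isOpen_compl_singleton.mem_nhds hz
  have hhC : ContDiffAt ℝ 2 h z :=
    ((hg.contDiffAt hopen).of_le (by exact WithTop.coe_le_coe.mpr (le_top : (2:ℕ∞) ≤ ⊤))).log (ne_of_gt (hgpos z hz))
  have hF1 : ContDiffAt ℝ 1 (fderiv ℝ h) z := hhC.fderiv_right (by norm_num)
  have hF2 : DifferentiableAt ℝ (fderiv ℝ h) z := hF1.differentiableAt one_ne_zero
  set F2 : E3 →L[ℝ] E3 →L[ℝ] ℝ := fderiv ℝ (fderiv ℝ h) z with hF2def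
  set K : E3 →L[ℝ] E3 :=
    ∑ i : Fin 3, ((ContinuousLinearMap.apply ℝ ℝ (ee i)).comp F2).smulRight (ee i) with hKdef
  have hG : HasFDerivAt (fun w => gradient h w) K z := by
    have hGrep : (fun w : E3 => gradient h w)
        = fun w : E3 => ∑ i : Fin 3, (fderiv ℝ h w (ee i)) • ee i := by
      funext w
      exact ISG.gradient_rep h w
    rw [hGrep, hKdef]
    refine HasFDerivAt.fun_sum fun i _ => ?_
    exact (((ContinuousLinearMap.apply ℝ ℝ (ee i)).hasFDerivAt).comp z
      hF2.hasFDerivAt).smul_const (ee i)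
  have hHeq : ∀ v, H v = K v := fun v => by
    show fderiv ℝ (fun w => gradient h w) z v = K v
    rw [hG.fderiv]
  have hIP : ∀ u v : E3, ⟪K u, v⟫ = F2 u v := by
    intro u v
    have h1 : ⟪K u, v⟫ = ∑ i : Fin 3, F2 u (ee i) * v i := by
      rw [hKdef, ContinuousLinearMap.sum_apply, sum_inner]
      refine Finset.sum_congr rfl fun i _ => ?_
      rw [ContinuousLinearMap.smulRight_apply, ContinuousLinearMap.comp_apply,
        real_inner_smul_left, ISG.inner_ee']
      rfl
    have h2 : F2 u v = ∑ i : Fin 3, F2 u (ee i) * v i := by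
      conv_lhs => rw [ISG.expand_ee v]
      rw [map_sum]
      refine Finset.sum_congr rfl fun i _ => ?_
      rw [ContinuousLinearMap.map_smul, smul_eq_mul, mul_comm]
    rw [h1, h2]
  have hsymm : ∀ u v : E3, ⟪K u, v⟫ = ⟪K v, u⟫ := by
    intro u v
    rw [hIP, hIP]
    exact hhC.isSymmSndFDerivAt (by simp) u v
  obtain ⟨DW, hW, hWv⟩ := ISG.hasFDerivAt_projfield hz hG
  have hWfd : fderiv ℝ W z = DW := hW.fderiv
  have hns := (ISG.hasFDerivAt_norm' hz).smul hW
  have happ1 : ∀ a : Fin 3,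
      fderiv ℝ (fun w => ‖w‖ • W w) z (‖z‖ • proj z (ee a)) = (‖z‖ ^ 2) • DW (proj z (ee a)) := by
    intro a
    rw [show (fun w => ‖w‖ • W w) = ((fun w : E3 => ‖w‖) • fun w => proj w (gradient h w)) from rfl,
      hns.fderiv]
    have hz0 : ⟪z, proj z (ee a)⟫ = 0 := ISG.inner_z_proj hz _
    simp only [ContinuousLinearMap.add_apply, ContinuousLinearMap.smul_apply,
      ContinuousLinearMap.smulRight_apply, innerSL_apply_apply, ContinuousLinearMap.map_smul, real_inner_smul_right,
      hz0, mul_zero, zero_smul, smul_zero, add_zero, smul_smul, smul_eq_mul]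
    rw [sq]
  refine ⟨?_, ?_⟩
  · rw [Finset.mul_sum]
    refine Finset.sum_congr rfl fun a _ => ?_
    rw [Finset.mul_sum]
    refine Finset.sum_congr rfl fun b _ => ?_
    rw [happ1 a, hWfd, real_inner_smul_left]
    ring
  · have hD : ∀ a : Fin 3, DW (proj z (ee a)) = K (proj z (ee a))
        - (⟪zhat z, K (proj z (ee a))⟫ + ‖z‖⁻¹ * ⟪proj z (proj z (ee a)), gradient h z⟫) • zhat z
        - (⟪zhat z, gradient h z⟫ * ‖z‖⁻¹) • proj z (proj z (ee a)) :=
      fun a => hWv (proj z (ee a))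
    have hcore := ISG.core_sum hz K (gradient h z) hsymm (fun a => DW (proj z (ee a))) hD
    have hdr : dr = ⟪zhat z, gradient h z⟫ := rfl
    have h4 : ‖z‖ ^ 4 * ‖z‖⁻¹ ^ 2 = ‖z‖ ^ 2 := by
      field_simp
    simp only [hdr, hHeq]
    rw [hWfd]
    calc ‖z‖ ^ 4 * ∑ a : Fin 3, ∑ b : Fin 3, ⟪DW (proj z (ee a)), ee b⟫ ^ 2
        = ‖z‖ ^ 4 * ((∑ a : Fin 3, ∑ b : Fin 3,
            (⟪proj z (ee a), K (proj z (ee b))⟫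
              - 1 / ‖z‖ * ⟪zhat z, gradient h z⟫ * ⟪ee a, proj z (ee b)⟫) ^ 2)
            + ‖z‖⁻¹ ^ 2 * ‖proj z (gradient h z)‖ ^ 2) := by rw [hcore]
      _ = _ := by rw [mul_add, ← mul_assoc, h4]
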